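/- arXiv:2604.15057 — 3 statements merged into one kernel-verified Lean document; each statement's English description precedes it below -/
import Mathlib

section
/- Let E be a non-Archimedean local field with uniformizer ϖ_E, let v, c ∈ O_E^× and h ∈ E^×, and set β_v = [[0, (vϖ_E)^{-1}],[1, 0]] and M(h) = [[0, 1],[h^{-1}, −h^{-1}·c·ϖ_E^{-1}]]. If M(h) = u·β_v^k·x·z for some k ∈ ℤ, u ∈ N(2,E), x ∈ O_E^× (viewed as a scalar matrix), and z ∈ U¹, then k is even. -/
/-- The value group `ℤₘ₀ = ℤ ∪ {0}` of a normalized discrete valuation. -/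
abbrev Zm0 : Type := WithZero (Multiplicative ℤ)

/-- The element of `ℤₘ₀` corresponding to `n : ℤ`; an element `x` with
`Valued.v x = zofZ (-n)` has normalized additive valuation `val_E x = n`. -/
abbrev zofZ (n : ℤ) : Zm0 := ((Multiplicative.ofAdd n : Multiplicative ℤ) : Zm0)

/-- For `a = v·ϖ ≠ 0`, the matrix `β_v = [[0, a⁻¹], [1, 0]]` as an invertible
element of the ring of `2×2` matrices over `E` (i.e. an element of `GL(2,E)`),
so that integer powers `β_v^k` make sense. -/
def betaUnit {E : Type} [Field E] (a : E) (ha : a ≠ 0) : (Matrix (Fin 2) (Fin 2) E)ˣ :=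
  ⟨!![0, a⁻¹; 1, 0], !![0, 1; a, 0],
   by simp [Matrix.mul_fin_two, Matrix.one_fin_two, inv_mul_cancel₀ ha],
   by simp [Matrix.mul_fin_two, Matrix.one_fin_two, mul_inv_cancel₀ ha]⟩

lemma betaUnit_sq {E : Type} [Field E] (a : E) (ha : a ≠ 0) :
    betaUnit a ha ^ (2:ℤ)
      = Units.map (algebraMap E (Matrix (Fin 2) (Fin 2) E)).toMonoidHom
          ((Units.mk0 a ha)⁻¹) := by
  ext i j
  simp only [betaUnit, zpow_two, Units.val_mul, Units.coe_map, RingHom.toMonoidHom_eq_coe,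
    MonoidHom.coe_coe, Matrix.algebraMap_matrix_apply, Units.val_inv_eq_inv_val, Units.val_mk0]
  fin_cases i <;> fin_cases j <;>
    simp [Matrix.mul_fin_two]

lemma betaUnit_odd_pow {E : Type} [Field E] (a : E) (ha : a ≠ 0) (m : ℤ) :
    ((betaUnit a ha ^ (2*m+1) : (Matrix (Fin 2) (Fin 2) E)ˣ) : Matrix (Fin 2) (Fin 2) E)
      = (a ^ (-m)) • !![0, a⁻¹; 1, 0] := by
  have h1 : betaUnit a ha ^ (2*m+1)
      = Units.map (algebraMap E (Matrix (Fin 2) (Fin 2) E)).toMonoidHom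
          (Units.mk0 a ha ^ (-m)) * betaUnit a ha := by
    rw [zpow_add_one, zpow_mul, betaUnit_sq, ← map_zpow, inv_zpow, ← zpow_neg]
  have h2 : ((Units.mk0 a ha ^ (-m) : Eˣ) : E) = a ^ (-m) :=
    Units.val_zpow_eq_zpow_val _ _
  rw [h1, Units.val_mul, Units.coe_map, h2]
  ext i j
  simp [Matrix.algebraMap_matrix_apply, Matrix.mul_apply, Fin.sum_univ_two,
    Matrix.one_apply, betaUnit]

/-- Let `E` be a non-Archimedean local field with uniformizer `ϖ`, let
`v, c ∈ O_E^×` and `h ∈ E^×`, and set `β_v = [[0,(vϖ)⁻¹],[1,0]]` and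
`M(h) = [[0,1],[h⁻¹, −h⁻¹·c·ϖ⁻¹]]`.  If `M(h) = u·β_v^k·x·z` with `k ∈ ℤ`,
`u = [[1,t],[0,1]] ∈ N(2,E)`, `x ∈ O_E^×` scalar, and `z ∈ U¹` (entries of `z` in
`O_E`, with `z₁₁ − 1, z₂₁, z₂₂ − 1 ∈ P_E`), then `k` is even. -/
theorem statement7
    (E : Type) [Field E] [Valued E Zm0] [CompleteSpace E]
    (hsurj : Function.Surjective (Valued.v : E → Zm0))
    (hfin : Finite (IsLocalRing.ResidueField ((Valued.v : Valuation E Zm0).valuationSubring)))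
    (ϖ v c : E)
    (hϖ : Valued.v ϖ = zofZ (-1))
    (hv : Valued.v v = (1 : Zm0))
    (hc : Valued.v c = (1 : Zm0))
    (h : E) (hh : h ≠ 0)
    (k : ℤ) (t x : E) (z : Matrix (Fin 2) (Fin 2) E)
    (hx : Valued.v x = (1 : Zm0))
    (hz11 : Valued.v (z 0 0 - 1) < (1 : Zm0))
    (hz21 : Valued.v (z 1 0) < (1 : Zm0))
    (hz22 : Valued.v (z 1 1 - 1) < (1 : Zm0))
    (hz12 : Valued.v (z 0 1) ≤ (1 : Zm0))
    (hM : !![(0 : E), 1; h⁻¹, -h⁻¹ * c * ϖ⁻¹]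
        = !![(1 : E), t; 0, 1]
          * ((betaUnit (v * ϖ)
                (mul_ne_zero (fun h0 => by simp [h0] at hv)
                  (fun h0 => by simp [h0] at hϖ)) ^ k : (Matrix (Fin 2) (Fin 2) E)ˣ)
              : Matrix (Fin 2) (Fin 2) E)
          * (x • (1 : Matrix (Fin 2) (Fin 2) E)) * z) :
    Even k := by
  by_contra hodd
  rw [Int.not_even_iff_odd] at hodd
  obtain ⟨m, hk⟩ := hodd
  subst hk
  set a : E := v * ϖ with ha_def
  have hv0 : v ≠ 0 := fun h0 => by simp [h0] at hv
  have hϖ0 : ϖ ≠ 0 := fun h0 => by simp [h0] at hϖ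
  have ha : a ≠ 0 := mul_ne_zero hv0 hϖ0
  rw [betaUnit_odd_pow] at hM
  have h10 := congrFun (congrFun hM 1) 0
  have h11 := congrFun (congrFun hM 1) 1
  simp [Matrix.mul_apply, Fin.sum_univ_two, Matrix.one_apply] at h10 h11
  have hs : x * ((v * ϖ) ^ m)⁻¹ ≠ 0 := by
    intro h0
    exact inv_ne_zero hh (by rw [h10, h0, zero_mul])
  have hz01 : z 0 1 = -(z 0 0 * c * ϖ⁻¹) := by
    have : x * ((v * ϖ) ^ m)⁻¹ * z 0 1
        = x * ((v * ϖ) ^ m)⁻¹ * (-(z 0 0 * c * ϖ⁻¹)) := by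
      rw [← h11, h10]; ring
    exact mul_left_cancel₀ hs this
  have hz00 : Valued.v (z 0 0) = 1 := by
    have e : z 0 0 = (z 0 0 - 1) + 1 := by ring
    rw [e, Valuation.map_add_eq_of_lt_right, Valued.v.map_one]
    rw [Valued.v.map_one]; exact hz11
  have hval : Valued.v (z 0 1) = zofZ 1 := by
    rw [hz01, Valuation.map_neg, Valuation.map_mul, Valuation.map_mul, map_inv₀,
      hz00, hc, hϖ]
    rfl
  rw [hval] at hz12
  exact absurd hz12 (by decide)
end

section
/- Let E/F be an unramified quadratic extension of non-Archimedean local fields, and let ψ : (E,+) → ℂ^× be a group homomorphism that is trivial on F and trivial on P_E but non-trivial on O_E. If c ∈ O_E^× satisfies ψ(c·x) = 1 for all x ∈ O_F, then the residue class of c in k_E lies in k_F^×. -/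
theorem Subfield.exists_eq_add_mul_of_finrank_eq_two {K : Type*} [Field K] (F : Subfield K)
    (hF2 : Module.finrank F K = 2) {c : K} (hc : c ∉ F) (y : K) :
    ∃ a ∈ F, ∃ b ∈ F, y = a + c * b := by
  have : Module.Finite F K := Module.finite_of_finrank_eq_succ hF2
  have hli : LinearIndependent F ![(1 : K), c] := by
    refine LinearIndependent.pair_iff.mpr fun s t hst => ?_
    by_cases ht : t = 0
    · subst ht
      simpa using hst
    · refine absurd ?_ hc
      have hc' : c = -(s / t : F) := by
        have ht' : (t : K) ≠ 0 := by exact_mod_cast ht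
        simp only [Subfield.smul_def, smul_eq_mul, mul_one] at hst
        push_cast
        field_simp
        linear_combination hst
      exact hc' ▸ (-(s / t)).2
  have hspan := hli.span_eq_top_of_card_eq_finrank' (by simp [hF2])
  rw [Matrix.range_cons, Matrix.range_cons, Matrix.range_empty, Set.union_empty,
    Set.singleton_union] at hspan
  obtain ⟨a, b, hab⟩ := Submodule.mem_span_pair.mp (hspan ▸ Submodule.mem_top (x := y))
  exact ⟨a, a.2, b, b.2, by rw [← hab]; simp [Subfield.smul_def, mul_comm]⟩

theorem Valuation.exists_eq_add_mul_of_one_le_map_sub {K Γ₀ : Type*} [Field K]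
    [LinearOrderedCommGroupWithZero Γ₀] (v : Valuation K Γ₀) (F : Subfield K)
    (hF2 : Module.finrank F K = 2) {c : K} (hc : ∀ a ∈ F, 1 ≤ v (c - a)) (y : K) :
    ∃ a ∈ F, ∃ b ∈ F, v b ≤ v y ∧ y = a + c * b := by
  have hcF : c ∉ F := fun h => by simpa using hc c h
  obtain ⟨a, ha, b, hb, rfl⟩ := F.exists_eq_add_mul_of_finrank_eq_two hF2 hcF y
  refine ⟨a, ha, b, hb, ?_, rfl⟩
  rcases eq_or_ne b 0 with rfl | hb0
  · simp
  have hdist : v ((a + c * b) / b) = v (c - -(a / b)) := by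
    congr 1
    field_simp
    ring
  have := hc _ (F.neg_mem (F.div_mem ha hb))
  rw [← hdist, map_div₀, le_div_iff₀ ((v.pos_iff).mpr hb0), one_mul] at this
  exact this

theorem statement9_general
    (E : Type) [Field E] [Valued E Zm0]
    (F : Subfield E) (hF2 : Module.finrank F E = 2)
    (ψ : AddChar E ℂˣ)
    (hψF : ∀ a ∈ F, ψ a = 1)
    (hψO : ∃ x : E, Valued.v x ≤ (1 : Zm0) ∧ ψ x ≠ 1)
    (c : E) (hc : Valued.v c = (1 : Zm0))
    (hcx : ∀ x ∈ F, Valued.v x ≤ (1 : Zm0) → ψ (c * x) = 1) :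
    ∃ a ∈ F, Valued.v a = (1 : Zm0) ∧ Valued.v (c - a) < (1 : Zm0) := by
  by_contra! hfar
  have hcfar : ∀ a ∈ F, 1 ≤ Valued.v (c - a) := fun a ha => by
    by_contra! hlt
    refine (hfar a ha ?_).not_gt hlt
    rw [Valuation.map_eq_of_sub_lt _ (by rwa [Valuation.map_sub_swap, hc]), hc]
  obtain ⟨y, hy1, hψy⟩ := hψO
  obtain ⟨a, ha, b, hb, hby, rfl⟩ := Valued.v.exists_eq_add_mul_of_one_le_map_sub F hF2 hcfar y
  exact hψy (by rw [AddChar.map_add_eq_mul, hψF a ha, hcx b hb (hby.trans hy1), one_mul])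

/-- Let `E/F` be an unramified quadratic extension of non-Archimedean
local fields (`val_E(F^×) = ℤ`), and let `ψ : (E,+) → ℂ^×` be an additive character
trivial on `F` and on `P_E` but non-trivial on `O_E`.  If `c ∈ O_E^×` satisfies
`ψ(c·x) = 1` for all `x ∈ O_F = O_E ∩ F`, then the residue class of `c` in `k_E`
lies in `k_F^×`. -/
theorem statement9
    (E : Type) [Field E] [Valued E Zm0] [CompleteSpace E]
    (hsurj : Function.Surjective (Valued.v : E → Zm0))
    (hfin : Finite (IsLocalRing.ResidueField ((Valued.v : Valuation E Zm0).valuationSubring)))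
    (F : Subfield E) (hF2 : Module.finrank F E = 2) (hFclosed : IsClosed (F : Set E))
    (hunram : ∀ γ : Zm0, γ ≠ 0 → ∃ a ∈ F, Valued.v a = γ)
    (ψ : AddChar E ℂˣ)
    (hψF : ∀ a ∈ F, ψ a = 1)
    (hψP : ∀ x : E, Valued.v x < (1 : Zm0) → ψ x = 1)
    (hψO : ∃ x : E, Valued.v x ≤ (1 : Zm0) ∧ ψ x ≠ 1)
    (c : E) (hc : Valued.v c = (1 : Zm0))
    (hcx : ∀ x ∈ F, Valued.v x ≤ (1 : Zm0) → ψ (c * x) = 1) :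
    ∃ a ∈ F, Valued.v a = (1 : Zm0) ∧ Valued.v (c - a) < (1 : Zm0) :=
  statement9_general E F hF2 ψ hψF hψO c hc hcx
end

section
/- Let E/F be an unramified quadratic extension of non-Archimedean local fields of odd residue characteristic, and let ϖ be a uniformizer of F (hence also of E). Let ψ : (E,+) → ℂ^× be a group homomorphism trivial on F and trivial on P_E. Let λ : E^× → ℂ^× be a group homomorphism trivial on F^× and trivial on 1+P_E², and suppose λ(1 + ϖ·x) = ψ(c·x) for all x ∈ O_E, where c ∈ O_E^× is of the form c = c₀·(1 + c₁·ϖ) with c₀ ∈ O_F^× and c₁ ∈ O_E. Let v ∈ O_E^× be such that its residue class lies in k_F^× (equivalently v ∈ O_F^×·(1+P_E)). Then λ(c^{-2}·ϖ²·(1 − (c²v)^{-1}·ϖ)) · ψ(2c·ϖ^{-1}) = 1. -/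
-- The value of a quasi-character `χ : E^× → ℂ^×` at a (nonzero) element of `E`,
-- extended by `1` at `0`.
open scoped Classical in
noncomputable def charVal {E : Type} [Field E] (χ : Eˣ →* ℂˣ) (x : E) : ℂˣ :=
  if h : x = 0 then 1 else χ (Units.mk0 x h)

lemma charVal_mul {E : Type} [Field E] (χ : Eˣ →* ℂˣ) {x y : E} (hx : x ≠ 0) (hy : y ≠ 0) :
    charVal χ (x * y) = charVal χ x * charVal χ y := by
  have hxy : x * y ≠ 0 := mul_ne_zero hx hy
  simp only [charVal, dif_neg hx, dif_neg hy, dif_neg hxy]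
  rw [show Units.mk0 (x*y) hxy = Units.mk0 x hx * Units.mk0 y hy from Units.ext rfl, map_mul]

lemma charVal_inv {E : Type} [Field E] (χ : Eˣ →* ℂˣ) (x : E) :
    charVal χ x⁻¹ = (charVal χ x)⁻¹ := by
  by_cases hx : x = 0
  · simp [charVal, hx]
  · have hxi : x⁻¹ ≠ 0 := inv_ne_zero hx
    simp only [charVal, dif_neg hx, dif_neg hxi]
    rw [show Units.mk0 x⁻¹ hxi = (Units.mk0 x hx)⁻¹ from Units.ext rfl, map_inv]

/-- Let `E/F` be an unramified quadratic extension of non-Archimedean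
local fields of odd residue characteristic (`2 ∈ O_E^×`), and let `ϖ` be a
uniformizer of `F` (hence of `E`).  Let `ψ : (E,+) → ℂ^×` be trivial on `F` and on
`P_E`.  Let `lam : E^× → ℂ^×` be trivial on `F^×` and on `1+P_E²`, with
`lam(1 + ϖ·x) = ψ(c·x)` for all `x ∈ O_E`, where `c = c₀·(1 + c₁·ϖ) ∈ O_E^×`,
`c₀ ∈ O_F^×`, `c₁ ∈ O_E`.  Let `v ∈ O_E^×` have residue class in `k_F^×`.  Then
`lam(c⁻²·ϖ²·(1 − (c²v)⁻¹·ϖ)) · ψ(2c·ϖ⁻¹) = 1`. -/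
theorem statement11
    (E : Type) [Field E] [Valued E Zm0] [CompleteSpace E]
    (hsurj : Function.Surjective (Valued.v : E → Zm0))
    (hfin : Finite (IsLocalRing.ResidueField ((Valued.v : Valuation E Zm0).valuationSubring)))
    (F : Subfield E) (hF2 : Module.finrank F E = 2) (hFclosed : IsClosed (F : Set E))
    (hodd : Valued.v (2 : E) = (1 : Zm0))
    (hunram : ∀ γ : Zm0, γ ≠ 0 → ∃ a ∈ F, Valued.v a = γ)
    (ϖ : E) (hϖF : ϖ ∈ F) (hϖ : Valued.v ϖ = zofZ (-1))
    (ψ : AddChar E ℂˣ)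
    (hψF : ∀ a ∈ F, ψ a = 1)
    (hψP : ∀ x : E, Valued.v x < (1 : Zm0) → ψ x = 1)
    (lam : Eˣ →* ℂˣ)
    (hlamF : ∀ a : Eˣ, (a : E) ∈ F → lam a = 1)
    (hlamP2 : ∀ u : Eˣ, Valued.v ((u : E) - 1) < zofZ (-1) → lam u = 1)
    (c c₀ c₁ : E)
    (hc : Valued.v c = (1 : Zm0))
    (hc₀F : c₀ ∈ F) (hc₀ : Valued.v c₀ = (1 : Zm0))
    (hc₁ : Valued.v c₁ ≤ (1 : Zm0))
    (hcform : c = c₀ * (1 + c₁ * ϖ))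
    (hmatch : ∀ x : E, Valued.v x ≤ (1 : Zm0) → charVal lam (1 + ϖ * x) = ψ (c * x))
    (v : E) (hv : Valued.v v = (1 : Zm0))
    (hvres : ∃ a ∈ F, Valued.v a = (1 : Zm0) ∧ Valued.v (v - a) < (1 : Zm0)) :
    charVal lam ((c ^ 2)⁻¹ * ϖ ^ 2 * (1 - (c ^ 2 * v)⁻¹ * ϖ)) * ψ (2 * c * ϖ⁻¹) = 1 := by
  obtain ⟨a, haF, ha, hva⟩ := hvres
  have hlt1 : zofZ (-1) < 1 := by decide
  have vne : ∀ {x : E} {γ : Zm0}, Valued.v x = γ → γ ≠ 0 → x ≠ 0 := by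
    intro x γ hx hγ h0
    rw [h0, map_zero] at hx; exact hγ hx.symm
  have hcne : c ≠ 0 := vne hc one_ne_zero
  have hc₀ne : c₀ ≠ 0 := vne hc₀ one_ne_zero
  have hϖne : ϖ ≠ 0 := vne hϖ (WithZero.coe_ne_zero)
  have hvne : v ≠ 0 := vne hv one_ne_zero
  have hane : a ≠ 0 := vne ha one_ne_zero
  have htne : (1 : E) + c₁ * ϖ ≠ 0 := by
    intro h0
    rw [h0, mul_zero] at hcform
    exact hcne hcform
  -- valuation of c₁ * ϖ etc.
  have hvc₁ϖ : Valued.v (c₁ * ϖ) < 1 := by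
    calc Valued.v (c₁ * ϖ) = Valued.v c₁ * Valued.v ϖ := map_mul _ _ _
    _ ≤ 1 * Valued.v ϖ := mul_le_mul_left hc₁ _
    _ = zofZ (-1) := by rw [one_mul, hϖ]
    _ < 1 := hlt1
  -- the factor u = 1 - (c^2*v)⁻¹*ϖ
  have hw : Valued.v ((c ^ 2 * v)⁻¹) = 1 := by
    rw [map_inv₀, map_mul, map_pow, hc, hv]; simp
  have hwϖ : Valued.v (-((c ^ 2 * v)⁻¹ * ϖ)) < 1 := by
    rw [Valuation.map_neg, map_mul, hw, one_mul, hϖ]; exact hlt1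
  have hune : (1 : E) - (c ^ 2 * v)⁻¹ * ϖ ≠ 0 := by
    have : Valued.v ((1 : E) - (c ^ 2 * v)⁻¹ * ϖ) = 1 := by
      rw [sub_eq_add_neg]; exact Valuation.map_one_add_of_lt _ hwϖ
    exact vne this one_ne_zero
  -- charVal of the F-part
  have hFpart : charVal lam ((c₀ ^ 2)⁻¹ * ϖ ^ 2) = 1 := by
    have hne : (c₀ ^ 2)⁻¹ * ϖ ^ 2 ≠ 0 := by
      apply mul_ne_zero (inv_ne_zero (pow_ne_zero _ hc₀ne)) (pow_ne_zero _ hϖne)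
    have hmem : (c₀ ^ 2)⁻¹ * ϖ ^ 2 ∈ F :=
      F.mul_mem (F.inv_mem (F.pow_mem hc₀F 2)) (F.pow_mem hϖF 2)
    simpa [charVal, dif_neg hne] using hlamF (Units.mk0 _ hne) hmem
  -- charVal of t = 1 + c₁ * ϖ
  have ht : charVal lam ((1 : E) + c₁ * ϖ) = ψ (c * c₁) := by
    have := hmatch c₁ hc₁
    rwa [show (1 : E) + ϖ * c₁ = 1 + c₁ * ϖ by ring] at this
  -- charVal of u
  have hu : charVal lam ((1 : E) - (c ^ 2 * v)⁻¹ * ϖ) = ψ (-(c * v)⁻¹) := by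
    have hx : Valued.v (-(c ^ 2 * v)⁻¹) ≤ 1 := by rw [Valuation.map_neg, hw]
    have := hmatch (-(c ^ 2 * v)⁻¹) hx
    rw [show (1 : E) + ϖ * -(c ^ 2 * v)⁻¹ = 1 - (c ^ 2 * v)⁻¹ * ϖ by ring] at this
    rw [this]
    congr 1
    field_simp
  -- factor the argument
  have hfactor : (c ^ 2)⁻¹ * ϖ ^ 2 * ((1 : E) - (c ^ 2 * v)⁻¹ * ϖ)
      = ((c₀ ^ 2)⁻¹ * ϖ ^ 2) * ((1 + c₁ * ϖ)⁻¹ * ((1 + c₁ * ϖ)⁻¹ *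
        ((1 : E) - (c ^ 2 * v)⁻¹ * ϖ))) := by
    have hc2 : (c ^ 2)⁻¹ = (c₀ ^ 2)⁻¹ * ((1 + c₁ * ϖ)⁻¹ * (1 + c₁ * ϖ)⁻¹) := by
      rw [hcform, mul_pow, mul_inv, sq (1 + c₁ * ϖ), mul_inv]
    rw [hc2]; ring
  have hchar : charVal lam ((c ^ 2)⁻¹ * ϖ ^ 2 * ((1 : E) - (c ^ 2 * v)⁻¹ * ϖ))
      = (ψ (c * c₁))⁻¹ * (ψ (c * c₁))⁻¹ * ψ (-(c * v)⁻¹) := by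
    rw [hfactor,
      charVal_mul lam (mul_ne_zero (inv_ne_zero (pow_ne_zero _ hc₀ne)) (pow_ne_zero _ hϖne))
        (mul_ne_zero (inv_ne_zero htne) (mul_ne_zero (inv_ne_zero htne) hune)),
      charVal_mul lam (inv_ne_zero htne) (mul_ne_zero (inv_ne_zero htne) hune),
      charVal_mul lam (inv_ne_zero htne) hune, hFpart, charVal_inv, ht, hu]
    rw [one_mul, mul_assoc]
  -- Now the whole expression equals ψ of a sum
  have hψtot : charVal lam ((c ^ 2)⁻¹ * ϖ ^ 2 * ((1 : E) - (c ^ 2 * v)⁻¹ * ϖ))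
      * ψ (2 * c * ϖ⁻¹)
      = ψ (-(c * c₁) + -(c * c₁) + -(c * v)⁻¹ + 2 * c * ϖ⁻¹) := by
    rw [hchar, AddChar.map_add_eq_mul, AddChar.map_add_eq_mul, AddChar.map_add_eq_mul,
      AddChar.map_neg_eq_inv, AddChar.map_neg_eq_inv]
  rw [hψtot]
  -- decompose the sum
  have hdecomp : -(c * c₁) + -(c * c₁) + -(c * v)⁻¹ + 2 * c * ϖ⁻¹
      = (2 * c₀ * ϖ⁻¹ - (c₀ * a)⁻¹)
        + (-(2 * c₀ * c₁ ^ 2 * ϖ) + ((c₀ * a)⁻¹ - (c * v)⁻¹)) := by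
    have h2 : -(c * c₁) + -(c * c₁) + 2 * c * ϖ⁻¹ = 2 * c₀ * ϖ⁻¹ - 2 * c₀ * c₁ ^ 2 * ϖ := by
      rw [hcform]; field_simp; ring
    linear_combination h2
  rw [hdecomp, AddChar.map_add_eq_mul]
  have hFmem : (2 : E) * c₀ * ϖ⁻¹ - (c₀ * a)⁻¹ ∈ F := by
    apply F.sub_mem
    · have h2F : (2 : E) ∈ F := by
        rw [show (2 : E) = 1 + 1 by norm_num]; exact F.add_mem F.one_mem F.one_mem
      exact F.mul_mem (F.mul_mem h2F hc₀F) (F.inv_mem hϖF)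
    · exact F.inv_mem (F.mul_mem hc₀F haF)
  rw [hψF _ hFmem, one_mul]
  apply hψP
  apply Valuation.map_add_lt
  · rw [Valuation.map_neg, map_mul, map_mul, map_mul, map_pow, hodd, hc₀, hϖ]
    calc (1 : Zm0) * 1 * Valued.v c₁ ^ 2 * zofZ (-1)
        ≤ 1 * 1 * 1 ^ 2 * zofZ (-1) := by
          exact mul_le_mul_left (mul_le_mul_right (pow_le_pow_left' hc₁ 2) _) _
      _ < 1 := by simpa using hlt1
  · -- (c₀*a)⁻¹ - (c*v)⁻¹ = (c*v - c₀*a) * (c₀*a*c*v)⁻¹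
    have herr : (c₀ * a)⁻¹ - (c * v)⁻¹
        = (c₀ * (v - a) + c₀ * c₁ * ϖ * v) * (c₀ * a * (c * v))⁻¹ := by
      rw [hcform]; field_simp; ring
    rw [herr, map_mul, map_inv₀, map_mul, map_mul, map_mul, hc₀, ha, hc, hv]
    have hnum : Valued.v (c₀ * (v - a) + c₀ * c₁ * ϖ * v) < 1 := by
      apply Valuation.map_add_lt
      · rw [map_mul, hc₀, one_mul]; exact hva
      · rw [map_mul, map_mul, map_mul, hc₀, hv]
        calc (1 : Zm0) * Valued.v c₁ * Valued.v ϖ * 1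
            ≤ 1 * 1 * Valued.v ϖ * 1 := by
              exact mul_le_mul_left (mul_le_mul_left (mul_le_mul_right hc₁ _) _) _
          _ < 1 := by rw [hϖ]; simpa using hlt1
    simpa using hnum
end
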